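/- Suppose X satisfies the δ-annular decay property, β > 0, α > 0 and α + β ≤ δ. If u is β-Hölder continuous and 𝓜_α u ≢ ∞, then 𝓜_α u is (α+β)-Hölder continuous with ‖𝓜_α u‖_{C^{0,α+β}} ≤ C ‖u‖_{C^{0,β}}. -/

import Mathlib

/-!
Fix `a ≠ b`, `d = d(a,b)` and `r > 0`, so that `B(a,r) ⊆ B(b,r+d)`. On the larger ball the
β-Hölder function `|u|` stays above `⨍_{B(a,r)} |u| - N (2(r+d))^β`, hence enlarging the ball lowers
the average by at most this oscillation times the relative measure of `B(b,r+d) \ B(a,r)`. That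
set lies in the annulus `B(b,r+d) \ B(b,r-d)`, whose relative measure is at most
`K (2d/(r+d))^δ ≤ K (2d/(r+d))^(α+β)` (and trivially at most `1` when `r ≤ d`). After
multiplying by `(r+d)^α` the error is `(1+K) 2^(α+2β) N d^(α+β)`, so
`r^α ⨍_{B(a,r)} |u| ≤ 𝓜_α u(b) + C N d^(α+β)`; take the supremum over `r` and swap `a` and `b`.
-/

open MeasureTheory Metric
open scoped ENNReal

/-- The fractional maximal function `𝓜_α u(x) = sup_{r>0} r^α ⨍_{B(x,r)} |u| dμ`. -/
noncomputable def frMax {X : Type*} [MetricSpace X] [MeasurableSpace X]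
    (μ : Measure X) (α : ℝ) (u : X → ℝ) (x : X) : ℝ :=
  sSup {t : ℝ | ∃ r : ℝ, 0 < r ∧ t = r ^ α * ⨍ y in ball x r, |u y| ∂μ}

open Set

section SetAverage

variable {α : Type*} [MeasurableSpace α] {μ : Measure α} {s t : Set α} {f g : α → ℝ}

/-- Unlike `ae_restrict_of_forall_mem`, no measurability of `s` is needed: balls need not be
measurable, as `X` is not assumed Borel. -/
theorem ae_restrict_le_of_forall_mem (hf : AEStronglyMeasurable f (μ.restrict s))
    (hg : AEStronglyMeasurable g (μ.restrict s)) (h : ∀ x ∈ s, f x ≤ g x) :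
    f ≤ᵐ[μ.restrict s] g := by
  refine ae_iff.2 ?_
  simp only [not_le]
  rw [Measure.restrict_apply₀ (hg.nullMeasurableSet_lt hf)]
  exact measure_mono_null (fun x ⟨hlt, hx⟩ => (hlt.not_ge (h x hx)).elim) measure_empty

theorem setAverage_sub_setAverage_le (hst : s ⊆ t) (hs : μ s ≠ 0) (ht : μ t ≠ ∞)
    (hf : IntegrableOn f t μ) {m : ℝ} (hm : ∀ x ∈ t, m ≤ f x) :
    ⨍ x in s, f x ∂μ - ⨍ x in t, f x ∂μ ≤
      (μ.real t - μ.real s) / μ.real t * (⨍ x in s, f x ∂μ - m) := by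
  have hs' : μ s ≠ ∞ := ne_top_of_le_ne_top ht (measure_mono hst)
  have hμt : 0 < μ.real t := ENNReal.toReal_pos (fun h => hs (measure_mono_null hst h)) ht
  have hfm : IntegrableOn (fun x => f x - m) t μ := hf.sub (integrableOn_const ht)
  have hmono : ∫ x in s, (f x - m) ∂μ ≤ ∫ x in t, (f x - m) ∂μ :=
    setIntegral_mono_set hfm (ae_restrict_le_of_forall_mem aestronglyMeasurable_const
      hfm.aestronglyMeasurable fun x hx => sub_nonneg.2 (hm x hx)) hst.eventuallyLE
  have hsub_const : ∀ {u : Set α}, μ u ≠ ∞ → IntegrableOn f u μ →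
      ∫ x in u, (f x - m) ∂μ = μ.real u * (⨍ x in u, f x ∂μ - m) := fun hu hfu => by
    rw [integral_sub hfu (integrableOn_const hu), setIntegral_const,
      ← measure_smul_setAverage f hu, smul_eq_mul, smul_eq_mul, mul_sub]
  rw [hsub_const hs' (hf.mono_set hst), hsub_const ht hf] at hmono
  rw [div_mul_eq_mul_div, le_div_iff₀ hμt]
  linarith

end SetAverage

section AnnularDecay

variable {X : Type*} [MetricSpace X] [MeasurableSpace X] {μ : Measure X} {K δ : ℝ}

def HasAnnularDecay (μ : Measure X) (K δ : ℝ) : Prop :=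
  ∀ (z : X) (R h : ℝ), 0 < R → 0 < h → h < R →
    μ (ball z R \ ball z (R - h)) ≤ ENNReal.ofReal (K * (h / R) ^ δ) * μ (ball z R)

theorem HasAnnularDecay.measureReal_ball_sub_measureReal_ball_le (hμ : HasAnnularDecay μ K δ)
    (hK : 0 ≤ K) {γ : ℝ} (hγ : 0 ≤ γ) (hγδ : γ ≤ δ) {a b : X} (hab : a ≠ b) {r : ℝ}
    (hr : 0 < r) (hfin : μ (ball b (r + dist a b)) ≠ ∞) :
    μ.real (ball b (r + dist a b)) - μ.real (ball a r) ≤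
      (1 + K) * (2 * dist a b / (r + dist a b)) ^ γ * μ.real (ball b (r + dist a b)) := by
  set d := dist a b with hd_def
  set s := r + d
  have hd : 0 < d := dist_pos.2 hab
  have hs : 0 < s := by positivity
  have hB₁ : μ (ball a r) ≠ ∞ := ne_top_of_le_ne_top hfin (measure_mono (ball_subset_ball' le_rfl))
  have hB₂ : 0 ≤ μ.real (ball b s) := measureReal_nonneg
  rcases le_or_gt s (2 * d) with hsd | hds
  · have hpow : 1 ≤ (2 * d / s) ^ γ := Real.one_le_rpow ((one_le_div hs).2 hsd) hγ
    calc μ.real (ball b s) - μ.real (ball a r) ≤ 1 * μ.real (ball b s) := by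
          linarith [measureReal_nonneg (μ := μ) (s := ball a r)]
      _ ≤ (1 + K) * (2 * d / s) ^ γ * μ.real (ball b s) := by gcongr; nlinarith
  · have hinner : ball b (s - 2 * d) ⊆ ball a r :=
      ball_subset_ball' (by rw [dist_comm, ← hd_def]; linarith)
    have hann := ENNReal.toReal_mono (ENNReal.mul_ne_top ENNReal.ofReal_ne_top hfin)
      (hμ b s (2 * d) hs (by positivity) hds)
    rw [ENNReal.toReal_mul, ENNReal.toReal_ofReal (by positivity)] at hann
    have hpow : (2 * d / s) ^ δ ≤ (2 * d / s) ^ γ :=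
      Real.rpow_le_rpow_of_exponent_ge (by positivity) ((div_le_one hs).2 hds.le) hγδ
    calc μ.real (ball b s) - μ.real (ball a r) ≤ μ.real (ball b s \ ball a r) :=
          le_measureReal_sdiff hB₁
      _ ≤ μ.real (ball b s \ ball b (s - 2 * d)) :=
          measureReal_mono (sdiff_subset_sdiff_right hinner)
            (ne_top_of_le_ne_top hfin (measure_mono sdiff_subset))
      _ ≤ K * (2 * d / s) ^ δ * μ.real (ball b s) := hann
      _ ≤ (1 + K) * (2 * d / s) ^ γ * μ.real (ball b s) := by
          gcongr ?_ * _
          exact mul_le_mul (by linarith) hpow (by positivity) (by linarith)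

end AnnularDecay

section FractionalMaximal

variable {X : Type*} [MetricSpace X] [MeasurableSpace X] {μ : Measure X} {K δ α β N : ℝ}
  {u : X → ℝ}

theorem rpow_mul_setAverage_le_add (hμ : HasAnnularDecay μ K δ) (hK : 0 ≤ K) (hα : 0 ≤ α)
    (hβ : 0 ≤ β) (hαβ : α + β ≤ δ) (hN : 0 ≤ N) (hu : ∀ z w, |u z - u w| ≤ N * dist z w ^ β)
    {a b : X} (hab : a ≠ b) {r : ℝ} (hr : 0 < r) (hpos : μ (ball a r) ≠ 0)
    (hfin : μ (ball b (r + dist a b)) ≠ ∞) (hint : IntegrableOn u (ball b (r + dist a b)) μ) :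
    r ^ α * ⨍ z in ball a r, |u z| ∂μ ≤
      (r + dist a b) ^ α * ⨍ z in ball b (r + dist a b), |u z| ∂μ +
        (1 + K) * 2 ^ (α + 2 * β) * N * dist a b ^ (α + β) := by
  set d := dist a b
  set s := r + d
  set F := ⨍ z in ball a r, |u z| ∂μ
  set c := N * (2 * s) ^ β
  have hd : 0 < d := dist_pos.2 hab
  have hs : 0 < s := by positivity
  have hsub : ball a r ⊆ ball b s := ball_subset_ball' le_rfl
  have hF : 0 ≤ F := by
    simp only [F, setAverage_eq]
    exact smul_nonneg (inv_nonneg.2 measureReal_nonneg) (integral_nonneg fun _ => abs_nonneg _)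
  have hosc : ∀ w ∈ ball b s, F - c ≤ |u w| := by
    obtain ⟨z, hz, hFz⟩ := exists_setAverage_le hpos
      (ne_top_of_le_ne_top hfin (measure_mono hsub)) (hint.mono_set hsub).abs
    intro w hw
    have hzw : dist z w ≤ 2 * s := by
      linarith [dist_triangle_right z w b, mem_ball.1 (hsub hz), mem_ball.1 hw]
    have : N * dist z w ^ β ≤ c := by simp only [c]; gcongr
    linarith [abs_sub_abs_le_abs_sub (u z) (u w), hu z w]
  have hgap := setAverage_sub_setAverage_le hsub hpos hfin hint.abs hosc
  have hratio : (μ.real (ball b s) - μ.real (ball a r)) / μ.real (ball b s) ≤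
      (1 + K) * (2 * d / s) ^ (α + β) := by
    have hμs : 0 < μ.real (ball b s) :=
      ENNReal.toReal_pos (fun h => hpos (measure_mono_null hsub h)) hfin
    rw [div_le_iff₀ hμs]
    exact hμ.measureReal_ball_sub_measureReal_ball_le hK (by positivity) hαβ hab hr hfin
  have hscale : s ^ α * ((1 + K) * (2 * d / s) ^ (α + β) * c) =
      (1 + K) * 2 ^ (α + 2 * β) * N * d ^ (α + β) := by
    simp only [c]
    rw [show α + 2 * β = (α + β) + β by ring, Real.rpow_add two_pos (α + β) β,
      Real.div_rpow (by positivity) hs.le, Real.mul_rpow two_pos.le hd.le,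
      Real.mul_rpow two_pos.le hs.le, Real.rpow_add hs α β]
    field_simp
  calc r ^ α * F ≤ s ^ α * F := by gcongr; linarith
    _ ≤ s ^ α * (⨍ z in ball b s, |u z| ∂μ + (1 + K) * (2 * d / s) ^ (α + β) * c) := by
      gcongr
      rw [sub_sub_cancel] at hgap
      nlinarith [show 0 ≤ c by positivity]
    _ = _ := by rw [mul_add, hscale]

theorem frMax_sub_frMax_le (hμ : HasAnnularDecay μ K δ) (hK : 0 ≤ K)
    (hball : ∀ (z : X) (s : ℝ), 0 < s → 0 < μ (ball z s) ∧ μ (ball z s) < ∞)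
    (hα : 0 ≤ α) (hβ : 0 ≤ β) (hαβ : α + β ≤ δ) (hN : 0 ≤ N)
    (hu : ∀ z w, |u z - u w| ≤ N * dist z w ^ β)
    (hint : ∀ (z : X) (s : ℝ), 0 < s → IntegrableOn u (ball z s) μ) (a : X) {b : X}
    (hbdd : BddAbove {t : ℝ | ∃ r : ℝ, 0 < r ∧ t = r ^ α * ⨍ y in ball b r, |u y| ∂μ}) :
    frMax μ α u a - frMax μ α u b ≤ (1 + K) * 2 ^ (α + 2 * β) * N * dist a b ^ (α + β) := by
  rcases eq_or_ne a b with rfl | hab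
  · rw [sub_self]
    positivity
  unfold frMax
  rw [sub_le_iff_le_add]
  refine csSup_le ⟨_, 1, one_pos, rfl⟩ ?_
  rintro t ⟨r, hr, rfl⟩
  have hs : 0 < r + dist a b := by positivity
  have hcore := rpow_mul_setAverage_le_add hμ hK hα hβ hαβ hN hu hab hr (hball a r hr).1.ne'
    (hball b _ hs).2.ne (hint b _ hs)
  linarith [le_csSup hbdd ⟨_, hs, rfl⟩]

end FractionalMaximal

theorem frMax_holder_to_holder_general
    {X : Type*} [MetricSpace X] [MeasurableSpace X] (μ : Measure X)
    (hball : ∀ (z : X) (s : ℝ), 0 < s → 0 < μ (ball z s) ∧ μ (ball z s) < ∞)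
    (δ : ℝ)
    (K : ℝ) (hK : 0 < K)
    (hann : ∀ (z : X) (R h : ℝ), 0 < R → 0 < h → h < R →
      μ (ball z R \ ball z (R - h)) ≤ ENNReal.ofReal (K * (h / R) ^ δ) * μ (ball z R))
    (α β : ℝ) (hα : 0 < α) (hβ : 0 < β) (hαβ : α + β ≤ δ) :
    ∃ C > (0 : ℝ), ∀ (u : X → ℝ) (N : ℝ), 0 ≤ N →
      (∀ (z : X) (s : ℝ), 0 < s → IntegrableOn u (ball z s) μ) →
      (∀ z w : X, |u z - u w| ≤ N * dist z w ^ β) →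
      (∀ x : X, BddAbove {t : ℝ | ∃ r : ℝ, 0 < r ∧ t = r ^ α * ⨍ y in ball x r, |u y| ∂μ}) →
      ∀ x y : X, |frMax μ α u x - frMax μ α u y| ≤ C * N * dist x y ^ (α + β) := by
  refine ⟨(1 + K) * 2 ^ (α + 2 * β), by positivity, fun u N hN hint hu hbdd x y => ?_⟩
  have key (a b : X) := frMax_sub_frMax_le hann hK.le hball hα.le hβ.le hαβ hN hu hint a (hbdd b)
  exact abs_sub_le_iff.2 ⟨key x y, dist_comm x y ▸ key y x⟩

/-- Under the δ-annular decay property with `β > 0`, `α > 0`, `α + β ≤ δ`,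
if `u` is β-Hölder continuous (seminorm at most `N`) and `𝓜_α u` is finite, then
`𝓜_α u` is `(α+β)`-Hölder continuous with `‖𝓜_α u‖_{C^{0,α+β}} ≤ C ‖u‖_{C^{0,β}}`. -/
theorem frMax_holder_to_holder
    {X : Type*} [MetricSpace X] [MeasurableSpace X] (μ : Measure X)
    (cd : ℝ≥0∞) (hcd : ∀ (z : X) (s : ℝ), 0 < s → μ (ball z (2 * s)) ≤ cd * μ (ball z s))
    (hball : ∀ (z : X) (s : ℝ), 0 < s → 0 < μ (ball z s) ∧ μ (ball z s) < ∞)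
    (δ : ℝ) (hδ0 : 0 < δ) (hδ1 : δ ≤ 1)
    (K : ℝ) (hK : 0 < K)
    (hann : ∀ (z : X) (R h : ℝ), 0 < R → 0 < h → h < R →
      μ (ball z R \ ball z (R - h)) ≤ ENNReal.ofReal (K * (h / R) ^ δ) * μ (ball z R))
    (α β : ℝ) (hα : 0 < α) (hβ : 0 < β) (hαβ : α + β ≤ δ) :
    ∃ C > (0 : ℝ), ∀ (u : X → ℝ) (N : ℝ), 0 ≤ N →
      (∀ (z : X) (s : ℝ), 0 < s → IntegrableOn u (ball z s) μ) →
      (∀ z w : X, |u z - u w| ≤ N * dist z w ^ β) →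
      (∀ x : X, BddAbove {t : ℝ | ∃ r : ℝ, 0 < r ∧ t = r ^ α * ⨍ y in ball x r, |u y| ∂μ}) →
      ∀ x y : X, |frMax μ α u x - frMax μ α u y| ≤ C * N * dist x y ^ (α + β) :=
  frMax_holder_to_holder_general μ hball δ K hK hann α β hα hβ hαβ
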